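/- Let $n, r, d$ be positive integers with $d + r < n$, and let $g_0 = \frac{d + (n-d-r+2)\ln(1 + d/r)}{d + \ln(1 + d/r)}$. Then for every integer $g$ with $1 \leq g < g_0$ and $g \leq n-d-r$, $p_Y(g-1) < p_Y(g)$, where $p_Y(g) = \prod_{i=0}^{g-1}(1-\frac{r}{n-i}) - \prod_{i=0}^{g-1}(1-\frac{r+d}{n-i})$. -/

import Mathlib

/-!
Write `g = k + 1`. Since `p_Y(k+1) - p_Y(k) = ((r+d) B - r A) / (n - k)`, where `A` and `B` are the
probabilities that a random `k`-pool avoids the `r` inhibitors, resp. the `r + d` inhibitors and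
defectives, it suffices to show `A / B < 1 + d/r`. Factorwise,
`A / B = ∏_{i<k} (1 + d/(n-r-d-i)) ≤ (1 + d/M)^k ≤ exp (k d / M)` with `M = n - r - d - k + 1`,
and `g < g₀` is exactly `k d < M log (1 + d/r)`.
-/

open Finset Real

noncomputable def avoidProb (n : ℕ) (s : ℝ) (g : ℕ) : ℝ :=
  ∏ i ∈ range g, (1 - s / ((n : ℝ) - i))

noncomputable def pY (n r d g : ℕ) : ℝ :=
  avoidProb n r g - avoidProb n ((r : ℝ) + d) g

lemma avoidProb_succ (n : ℕ) (s : ℝ) (k : ℕ) :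
    avoidProb n s (k + 1) = avoidProb n s k * (1 - s / ((n : ℝ) - k)) :=
  prod_range_succ _ _

lemma avoidProb_pos {n k : ℕ} {s : ℝ} (hs : 0 ≤ s) (h : s + k ≤ n) : 0 < avoidProb n s k := by
  refine prod_pos fun i hi => sub_pos.mpr ((div_lt_one ?_).mpr ?_)
  all_goals
    have : (i : ℝ) + 1 ≤ k := by exact_mod_cast mem_range.mp hi
    linarith

lemma pY_succ_sub (n r d k : ℕ) :
    pY n r d (k + 1) - pY n r d k =
      (((r : ℝ) + d) * avoidProb n ((r : ℝ) + d) k - r * avoidProb n r k) / ((n : ℝ) - k) := by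
  simp only [pY, avoidProb_succ]
  ring

lemma pY_lt_pY_succ {n r d k : ℕ} (hk : (k : ℝ) < n)
    (h : r * avoidProb n r k < ((r : ℝ) + d) * avoidProb n ((r : ℝ) + d) k) :
    pY n r d k < pY n r d (k + 1) := by
  rw [← sub_pos, pY_succ_sub]
  exact div_pos (sub_pos.mpr h) (sub_pos.mpr hk)

lemma one_sub_div_le_mul_one_add_div {m M r d : ℝ} (hm : 0 < m) (hM : 0 < M) (hd : 0 ≤ d)
    (hMm : M ≤ m - r - d) : 1 - r / m ≤ (1 - (r + d) / m) * (1 + d / M) := by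
  have gap : (1 - (r + d) / m) * (1 + d / M) - (1 - r / m) = d * (m - r - d - M) / (m * M) := by
    field_simp
    ring
  rw [← sub_nonneg, gap]
  exact div_nonneg (mul_nonneg hd (by linarith)) (by positivity)

lemma avoidProb_le_mul_pow {n k : ℕ} {r d : ℝ} (hr : 0 ≤ r) (hd : 0 ≤ d) (h : r + d + k ≤ n) :
    avoidProb n r k ≤ avoidProb n (r + d) k * (1 + d / ((n : ℝ) - r - d - k + 1)) ^ k := by
  set t := 1 + d / ((n : ℝ) - r - d - k + 1)
  rw [avoidProb, avoidProb, ← card_range k, ← prod_const t, card_range, ← prod_mul_distrib]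
  refine prod_le_prod (fun i hi => ?_) (fun i hi => ?_)
  all_goals have : (i : ℝ) + 1 ≤ k := by exact_mod_cast mem_range.mp hi
  · exact sub_nonneg.mpr (div_le_one_of_le₀ (by linarith) (by linarith))
  · exact one_sub_div_le_mul_one_add_div (by linarith) (by linarith) hd (by linarith)

lemma one_add_pow_lt_of_mul_lt_log {x y : ℝ} {k : ℕ} (hx : -1 ≤ x) (hy : 0 < y)
    (h : k * x < log y) : (1 + x) ^ k < y :=
  calc (1 + x) ^ k ≤ exp x ^ k := pow_le_pow_left₀ (by linarith) (by linarith [add_one_le_exp x]) k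
    _ = exp (k * x) := (exp_nat_mul x k).symm
    _ < y := (lt_log_iff_exp_lt hy).mp h

lemma lt_g0_iff {g d a L : ℝ} (hpos : 0 < d + L) :
    g < (d + (a + 2) * L) / (d + L) ↔ (g - 1) * d < (a + 2 - g) * L := by
  rw [lt_div_iff₀ hpos]
  constructor <;> intro h <;> linarith

theorem pY_increasing_below_g0_general (n r d : ℕ) (hr : 0 < r) (hd : 0 < d)
    (hdr : d + r < n) (g : ℕ) (hg : 1 ≤ g)
    (hg0 : (g : ℝ) < ((d : ℝ) + ((n : ℝ) - d - r + 2) * Real.log (1 + (d : ℝ) / r)) /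
        ((d : ℝ) + Real.log (1 + (d : ℝ) / r)))
    (hgle : g ≤ n - d - r) :
    ∏ i ∈ Finset.range (g - 1), (1 - (r : ℝ) / ((n : ℝ) - i))
        - ∏ i ∈ Finset.range (g - 1), (1 - ((r : ℝ) + d) / ((n : ℝ) - i))
      < ∏ i ∈ Finset.range g, (1 - (r : ℝ) / ((n : ℝ) - i))
        - ∏ i ∈ Finset.range g, (1 - ((r : ℝ) + d) / ((n : ℝ) - i)) := by
  obtain ⟨k, rfl⟩ : ∃ k, g = k + 1 := ⟨g - 1, by omega⟩
  show pY n r d (k + 1 - 1) < pY n r d (k + 1)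
  rw [Nat.add_sub_cancel]
  have hrR : (0 : ℝ) < r := by exact_mod_cast hr
  have hdR : (0 : ℝ) < d := by exact_mod_cast hd
  have hL : 0 < log (1 + (d : ℝ) / r) := log_pos (lt_add_of_pos_right 1 (div_pos hdR hrR))
  have hk : (r : ℝ) + d + k + 1 ≤ n := by exact_mod_cast (by omega : r + d + k + 1 ≤ n)
  have hM : (0 : ℝ) < n - r - d - k + 1 := by linarith
  have hkey : k * ((d : ℝ) / (n - r - d - k + 1)) < log (1 + (d : ℝ) / r) := by
    rw [lt_g0_iff (by linarith)] at hg0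
    rw [mul_div_assoc', div_lt_iff₀ hM]
    push_cast at hg0
    linarith
  refine pY_lt_pY_succ (by linarith) ?_
  calc r * avoidProb n r k
      ≤ r * (avoidProb n ((r : ℝ) + d) k * (1 + d / ((n : ℝ) - r - d - k + 1)) ^ k) :=
        mul_le_mul_of_nonneg_left (avoidProb_le_mul_pow hrR.le hdR.le (by linarith)) hrR.le
    _ < r * (avoidProb n ((r : ℝ) + d) k * (1 + d / r)) := by
        gcongr
        · exact avoidProb_pos (by positivity) (by linarith)
        · have := div_nonneg hdR.le hM.le
          exact one_add_pow_lt_of_mul_lt_log (by linarith) (by positivity) hkey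
    _ = ((r : ℝ) + d) * avoidProb n ((r : ℝ) + d) k := by field_simp

theorem pY_increasing_below_g0 (n r d : ℕ) (hn : 0 < n) (hr : 0 < r) (hd : 0 < d)
    (hdr : d + r < n) (g : ℕ) (hg : 1 ≤ g)
    (hg0 : (g : ℝ) < ((d : ℝ) + ((n : ℝ) - d - r + 2) * Real.log (1 + (d : ℝ) / r)) /
        ((d : ℝ) + Real.log (1 + (d : ℝ) / r)))
    (hgle : g ≤ n - d - r) :
    ∏ i ∈ Finset.range (g - 1), (1 - (r : ℝ) / ((n : ℝ) - i))
        - ∏ i ∈ Finset.range (g - 1), (1 - ((r : ℝ) + d) / ((n : ℝ) - i))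
      < ∏ i ∈ Finset.range g, (1 - (r : ℝ) / ((n : ℝ) - i))
        - ∏ i ∈ Finset.range g, (1 - ((r : ℝ) + d) / ((n : ℝ) - i)) :=
  pY_increasing_below_g0_general n r d hr hd hdr g hg hg0 hgle
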